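/- arXiv:2404.10692 — 4 statements merged into one kernel-verified Lean document; each statement's English description precedes it below -/
import Mathlib

section
/- Let r be a nonzero real number and s a complex number that is not a pole of any of the gamma factors involved. Then Σ_{δ ∈ {0,1}} [Γ_ℝ(1−s+δ)² / Γ_ℝ(s+δ)²] · Π_{±} [Γ_ℝ(−1/2 + δ ± ir + s) / Γ_ℝ(3/2 + δ ± ir − s)] = (2/π) · (2 cosh(πr) − sin(2πs)) · Γ(1−s)² · Π_{±} Γ(−1/2 ± ir + s). -/
open Complex

/-- The archimedean gamma factor `Γ_ℝ(s) = π^{-s/2} Γ(s/2)`. -/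
noncomputable def GammaR (s : ℂ) : ℂ := (Real.pi : ℂ) ^ (-s/2) * Complex.Gamma (s/2)

lemma piC_ne : (Real.pi : ℂ) ≠ 0 := ofReal_ne_zero.2 Real.pi_ne_zero

lemma sinNe (z : ℂ) (h : ∀ k : ℤ, z ≠ (k : ℂ)) : Complex.sin ((Real.pi : ℂ) * z) ≠ 0 := by
  intro h0
  rw [Complex.sin_eq_zero_iff] at h0
  obtain ⟨k, hk⟩ := h0
  exact h k (mul_left_cancel₀ piC_ne (by linear_combination hk))

lemma natNeg (k : ℤ) (hk : k ≤ 0) : ∃ n : ℕ, ((k : ℤ) : ℂ) = -((n : ℕ) : ℂ) := by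
  refine ⟨(-k).toNat, ?_⟩
  have h1 : (((-k).toNat : ℤ)) = -k := Int.toNat_of_nonneg (by omega)
  have h2 : (((-k).toNat : ℤ) : ℂ) = ((-k : ℤ) : ℂ) := by rw [h1]
  push_cast at h2 ⊢
  linear_combination h2

lemma GammaR_div (w y z : ℂ) (hzy : 1 - z = y/2) (hs : Complex.sin ((Real.pi : ℂ) * z) ≠ 0) :
    GammaR w / GammaR y = (Real.pi : ℂ)^((y-w)/2) * Complex.Gamma (w/2) * Complex.Gamma z *
      Complex.sin ((Real.pi : ℂ) * z) / (Real.pi : ℂ) := by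
  have hrefl := Complex.Gamma_mul_Gamma_one_sub z
  rw [hzy, eq_div_iff hs] at hrefl
  have hΓy : Complex.Gamma (y/2) ≠ 0 := by
    intro h0
    rw [h0] at hrefl
    exact piC_ne (by linear_combination -hrefl)
  have hpy : (Real.pi : ℂ)^(-y/2) ≠ 0 := by
    rw [Complex.cpow_def_of_ne_zero piC_ne]; exact Complex.exp_ne_zero _
  rw [GammaR, GammaR, show (y-w)/2 = -w/2 - (-y/2) by ring, Complex.cpow_sub _ _ piC_ne]
  field_simp [hΓy, hpy, piC_ne]
  linear_combination (-Complex.Gamma (w/2)) * hrefl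

lemma trigKey (r : ℝ) (s : ℂ) :
    8 * Complex.sin ((Real.pi : ℂ) * ((2-s)/2))^2 * Complex.sin ((Real.pi : ℂ) * ((1/2 - I*r + s)/2)) *
        Complex.sin ((Real.pi : ℂ) * ((1/2 + I*r + s)/2))
      + 8 * Complex.sin ((Real.pi : ℂ) * ((1-s)/2))^2 * Complex.sin ((Real.pi : ℂ) * ((-1/2 - I*r + s)/2)) *
        Complex.sin ((Real.pi : ℂ) * ((-1/2 + I*r + s)/2))
    = 2 * (2 * Complex.cosh ((Real.pi : ℂ) * (r : ℂ)) - Complex.sin (2 * (Real.pi : ℂ) * s)) := by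
  have ps : ∀ x y : ℂ, Complex.sin x * Complex.sin y =
      (Complex.cos (x - y) - Complex.cos (x + y))/2 := by
    intro x y; rw [Complex.cos_sub, Complex.cos_add]; ring
  calc 8 * Complex.sin ((Real.pi : ℂ) * ((2-s)/2))^2 * Complex.sin ((Real.pi : ℂ) * ((1/2 - I*r + s)/2)) *
        Complex.sin ((Real.pi : ℂ) * ((1/2 + I*r + s)/2))
      + 8 * Complex.sin ((Real.pi : ℂ) * ((1-s)/2))^2 * Complex.sin ((Real.pi : ℂ) * ((-1/2 - I*r + s)/2)) *
        Complex.sin ((Real.pi : ℂ) * ((-1/2 + I*r + s)/2))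
      = 8 * Complex.sin ((Real.pi : ℂ) * ((2-s)/2))^2 *
          (Complex.sin ((Real.pi : ℂ) * ((1/2 - I*r + s)/2)) * Complex.sin ((Real.pi : ℂ) * ((1/2 + I*r + s)/2)))
        + 8 * Complex.sin ((Real.pi : ℂ) * ((1-s)/2))^2 *
          (Complex.sin ((Real.pi : ℂ) * ((-1/2 - I*r + s)/2)) * Complex.sin ((Real.pi : ℂ) * ((-1/2 + I*r + s)/2))) := by
        ring
    _ = 2 * (2 * Complex.cosh ((Real.pi : ℂ) * (r : ℂ)) - Complex.sin (2 * (Real.pi : ℂ) * s)) := by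
        rw [ps, ps]
        rw [show (Real.pi : ℂ) * ((1/2 - I*r + s)/2) - (Real.pi : ℂ) * ((1/2 + I*r + s)/2)
              = -((Real.pi : ℂ) * (r : ℂ) * I) by ring]
        rw [show (Real.pi : ℂ) * ((1/2 - I*r + s)/2) + (Real.pi : ℂ) * ((1/2 + I*r + s)/2)
              = (Real.pi : ℂ) * s + (Real.pi : ℂ)/2 by ring]
        rw [show (Real.pi : ℂ) * ((-1/2 - I*r + s)/2) - (Real.pi : ℂ) * ((-1/2 + I*r + s)/2)
              = -((Real.pi : ℂ) * (r : ℂ) * I) by ring]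
        rw [show (Real.pi : ℂ) * ((-1/2 - I*r + s)/2) + (Real.pi : ℂ) * ((-1/2 + I*r + s)/2)
              = (Real.pi : ℂ) * s - (Real.pi : ℂ)/2 by ring]
        rw [show (Real.pi : ℂ) * ((2-s)/2) = (Real.pi : ℂ) - (Real.pi : ℂ) * s/2 by ring]
        rw [show (Real.pi : ℂ) * ((1-s)/2) = (Real.pi : ℂ)/2 - (Real.pi : ℂ) * s/2 by ring]
        rw [Complex.sin_pi_sub, Complex.sin_pi_div_two_sub, Complex.cos_neg, Complex.cos_mul_I,
          Complex.cos_add_pi_div_two, Complex.cos_sub_pi_div_two]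
        rw [show 2 * (Real.pi : ℂ) * s = 2 * ((Real.pi : ℂ) * s) by ring, Complex.sin_two_mul]
        have h2 : Complex.sin ((Real.pi : ℂ) * s)
            = 2 * Complex.sin ((Real.pi : ℂ) * s/2) * Complex.cos ((Real.pi : ℂ) * s/2) := by
          have h := Complex.sin_two_mul ((Real.pi : ℂ) * s/2)
          rw [show (2:ℂ) * ((Real.pi : ℂ) * s/2) = (Real.pi : ℂ) * s by ring] at h
          exact h
        have h3 : Complex.cos ((Real.pi : ℂ) * s)
            = 2 * Complex.cos ((Real.pi : ℂ) * s/2)^2 - 1 := by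
          have h := Complex.cos_two_mul ((Real.pi : ℂ) * s/2)
          rw [show (2:ℂ) * ((Real.pi : ℂ) * s/2) = (Real.pi : ℂ) * s by ring] at h
          exact h
        rw [h2, h3]
        linear_combination (4 * Complex.cosh ((Real.pi : ℂ) * (r : ℂ))
            + 8 * Complex.sin ((Real.pi : ℂ) * s/2) * Complex.cos ((Real.pi : ℂ) * s/2))
          * Complex.sin_sq_add_cos_sq ((Real.pi : ℂ) * s/2)

/-- The gamma-factor identity computing `G(s)` in the appendix:
`Σ_{δ∈{0,1}} Γ_ℝ(1−s+δ)²/Γ_ℝ(s+δ)² · Π_± Γ_ℝ(−1/2+δ±ir+s)/Γ_ℝ(3/2+δ±ir−s)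
 = (2/π)(2 cosh(πr) − sin(2πs)) Γ(1−s)² Π_± Γ(−1/2±ir+s)`. -/
theorem stmt1 (r : ℝ) (hr : r ≠ 0) (s : ℂ)
    (hGR : ∀ w ∈ ({1 - s, s, -1/2 + I*r + s, -1/2 - I*r + s, 3/2 + I*r - s, 3/2 - I*r - s,
        2 - s, 1 + s, 1/2 + I*r + s, 1/2 - I*r + s, 5/2 + I*r - s, 5/2 - I*r - s} : Set ℂ),
      ∀ n : ℕ, w ≠ -(2*n : ℂ))
    (hG : ∀ w ∈ ({1 - s, -1/2 + I*r + s, -1/2 - I*r + s} : Set ℂ), ∀ n : ℕ, w ≠ -(n : ℂ)) :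
    (GammaR (1 - s))^2 / (GammaR s)^2 *
        (GammaR (-1/2 + I*r + s) / GammaR (3/2 + I*r - s)) *
        (GammaR (-1/2 - I*r + s) / GammaR (3/2 - I*r - s))
      + (GammaR (2 - s))^2 / (GammaR (1 + s))^2 *
        (GammaR (1/2 + I*r + s) / GammaR (5/2 + I*r - s)) *
        (GammaR (1/2 - I*r + s) / GammaR (5/2 - I*r - s))
    = (2 / (Real.pi : ℂ)) * (2 * Complex.cosh ((Real.pi * r : ℝ) : ℂ) - Complex.sin (2 * (Real.pi : ℂ) * s)) *
        (Complex.Gamma (1 - s))^2 *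
        Complex.Gamma (-1/2 + I*r + s) * Complex.Gamma (-1/2 - I*r + s) := by
  -- sin nonvanishing facts
  have s1 : Complex.sin ((Real.pi : ℂ) * ((2 - s)/2)) ≠ 0 := by
    apply sinNe; intro k hk
    rcases le_or_gt k 0 with h | h
    · obtain ⟨n, hn⟩ := natNeg k h
      exact hGR (2 - s) (by repeat first | exact Set.mem_insert _ _ | exact Set.mem_singleton _ | apply Set.mem_insert_of_mem) n (by linear_combination 2*hk + 2*hn)
    · obtain ⟨n, hn⟩ := natNeg (1 - k) (by omega)
      push_cast at hn
      exact hGR s (by repeat first | exact Set.mem_insert _ _ | exact Set.mem_singleton _ | apply Set.mem_insert_of_mem) n (by linear_combination (-2)*hk + 2*hn)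
  have s2 : Complex.sin ((Real.pi : ℂ) * ((1/2 - I*r + s)/2)) ≠ 0 := by
    apply sinNe; intro k hk
    rcases le_or_gt k 0 with h | h
    · obtain ⟨n, hn⟩ := natNeg (2*k - 1) (by omega)
      push_cast at hn
      exact hG (-1/2 - I*r + s) (by repeat first | exact Set.mem_insert _ _ | exact Set.mem_singleton _ | apply Set.mem_insert_of_mem) n (by linear_combination 2*hk + hn)
    · obtain ⟨n, hn⟩ := natNeg (1 - k) (by omega)
      push_cast at hn
      exact hGR (3/2 + I*r - s) (by repeat first | exact Set.mem_insert _ _ | exact Set.mem_singleton _ | apply Set.mem_insert_of_mem) n (by linear_combination (-2)*hk + 2*hn)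
  have s3 : Complex.sin ((Real.pi : ℂ) * ((1/2 + I*r + s)/2)) ≠ 0 := by
    apply sinNe; intro k hk
    rcases le_or_gt k 0 with h | h
    · obtain ⟨n, hn⟩ := natNeg (2*k - 1) (by omega)
      push_cast at hn
      exact hG (-1/2 + I*r + s) (by repeat first | exact Set.mem_insert _ _ | exact Set.mem_singleton _ | apply Set.mem_insert_of_mem) n (by linear_combination 2*hk + hn)
    · obtain ⟨n, hn⟩ := natNeg (1 - k) (by omega)
      push_cast at hn
      exact hGR (3/2 - I*r - s) (by repeat first | exact Set.mem_insert _ _ | exact Set.mem_singleton _ | apply Set.mem_insert_of_mem) n (by linear_combination (-2)*hk + 2*hn)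
  have s4 : Complex.sin ((Real.pi : ℂ) * ((1 - s)/2)) ≠ 0 := by
    apply sinNe; intro k hk
    rcases le_or_gt k 0 with h | h
    · obtain ⟨n, hn⟩ := natNeg k h
      exact hGR (1 - s) (by repeat first | exact Set.mem_insert _ _ | exact Set.mem_singleton _ | apply Set.mem_insert_of_mem) n (by linear_combination 2*hk + 2*hn)
    · obtain ⟨n, hn⟩ := natNeg (1 - k) (by omega)
      push_cast at hn
      exact hGR (1 + s) (by repeat first | exact Set.mem_insert _ _ | exact Set.mem_singleton _ | apply Set.mem_insert_of_mem) n (by linear_combination (-2)*hk + 2*hn)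
  have s5 : Complex.sin ((Real.pi : ℂ) * ((-1/2 - I*r + s)/2)) ≠ 0 := by
    apply sinNe; intro k hk
    rcases le_or_gt k 0 with h | h
    · obtain ⟨n, hn⟩ := natNeg k h
      exact hGR (-1/2 - I*r + s) (by repeat first | exact Set.mem_insert _ _ | exact Set.mem_singleton _ | apply Set.mem_insert_of_mem) n (by linear_combination 2*hk + 2*hn)
    · obtain ⟨n, hn⟩ := natNeg (1 - k) (by omega)
      push_cast at hn
      exact hGR (5/2 + I*r - s) (by repeat first | exact Set.mem_insert _ _ | exact Set.mem_singleton _ | apply Set.mem_insert_of_mem) n (by linear_combination (-2)*hk + 2*hn)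
  have s6 : Complex.sin ((Real.pi : ℂ) * ((-1/2 + I*r + s)/2)) ≠ 0 := by
    apply sinNe; intro k hk
    rcases le_or_gt k 0 with h | h
    · obtain ⟨n, hn⟩ := natNeg k h
      exact hGR (-1/2 + I*r + s) (by repeat first | exact Set.mem_insert _ _ | exact Set.mem_singleton _ | apply Set.mem_insert_of_mem) n (by linear_combination 2*hk + 2*hn)
    · obtain ⟨n, hn⟩ := natNeg (1 - k) (by omega)
      push_cast at hn
      exact hGR (5/2 - I*r - s) (by repeat first | exact Set.mem_insert _ _ | exact Set.mem_singleton _ | apply Set.mem_insert_of_mem) n (by linear_combination (-2)*hk + 2*hn)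
  -- duplication formulas
  have dup1 : Complex.Gamma ((1-s)/2) * Complex.Gamma ((2-s)/2)
      = Complex.Gamma (1-s) * (2:ℂ)^s * ((Real.sqrt Real.pi : ℝ) : ℂ) := by
    have h := Complex.Gamma_mul_Gamma_add_half ((1-s)/2)
    rw [show (1-s)/2 + 1/2 = (2-s)/2 by ring, show (2:ℂ)*((1-s)/2) = 1-s by ring,
      show (1:ℂ) - (1-s) = s by ring] at h
    exact h
  have dup2 : Complex.Gamma ((-1/2 + I*r + s)/2) * Complex.Gamma ((1/2 + I*r + s)/2)
      = Complex.Gamma (-1/2 + I*r + s) * (2:ℂ)^(3/2 - I*r - s) * ((Real.sqrt Real.pi : ℝ) : ℂ) := by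
    have h := Complex.Gamma_mul_Gamma_add_half ((-1/2 + I*r + s)/2)
    rw [show (-1/2 + I*(r:ℂ) + s)/2 + 1/2 = (1/2 + I*r + s)/2 by ring,
      show (2:ℂ)*((-1/2 + I*(r:ℂ) + s)/2) = -1/2 + I*r + s by ring,
      show (1:ℂ) - (-1/2 + I*(r:ℂ) + s) = 3/2 - I*r - s by ring] at h
    exact h
  have dup3 : Complex.Gamma ((-1/2 - I*r + s)/2) * Complex.Gamma ((1/2 - I*r + s)/2)
      = Complex.Gamma (-1/2 - I*r + s) * (2:ℂ)^(3/2 + I*r - s) * ((Real.sqrt Real.pi : ℝ) : ℂ) := by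
    have h := Complex.Gamma_mul_Gamma_add_half ((-1/2 - I*r + s)/2)
    rw [show (-1/2 - I*(r:ℂ) + s)/2 + 1/2 = (1/2 - I*r + s)/2 by ring,
      show (2:ℂ)*((-1/2 - I*(r:ℂ) + s)/2) = -1/2 - I*r + s by ring,
      show (1:ℂ) - (-1/2 - I*(r:ℂ) + s) = 3/2 + I*r - s by ring] at h
    exact h
  -- power bookkeeping
  have hR2 : ((Real.sqrt Real.pi : ℝ) : ℂ) * ((Real.sqrt Real.pi : ℝ) : ℂ) = (Real.pi : ℂ) := by
    rw [← Complex.ofReal_mul, Real.mul_self_sqrt Real.pi_pos.le]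
  have h2pow : (2:ℂ)^s * (2:ℂ)^s * ((2:ℂ)^(3/2 - I*(r:ℂ) - s) * (2:ℂ)^(3/2 + I*(r:ℂ) - s)) = 8 := by
    rw [← Complex.cpow_add _ _ (two_ne_zero), ← Complex.cpow_add _ _ (two_ne_zero),
      ← Complex.cpow_add _ _ (two_ne_zero),
      show s + s + (3/2 - I*(r:ℂ) - s + (3/2 + I*(r:ℂ) - s)) = ((3:ℕ):ℂ) by push_cast; ring,
      Complex.cpow_natCast]
    norm_num
  have hppow0 : (Real.pi : ℂ)^((s - (1-s))/2) * (Real.pi : ℂ)^((s - (1-s))/2) *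
      ((Real.pi : ℂ)^((3/2 + I*(r:ℂ) - s - (-1/2 + I*(r:ℂ) + s))/2) *
       (Real.pi : ℂ)^((3/2 - I*(r:ℂ) - s - (-1/2 - I*(r:ℂ) + s))/2)) = (Real.pi : ℂ) := by
    rw [← Complex.cpow_add _ _ piC_ne, ← Complex.cpow_add _ _ piC_ne, ← Complex.cpow_add _ _ piC_ne,
      show (s - (1-s))/2 + (s - (1-s))/2 + ((3/2 + I*(r:ℂ) - s - (-1/2 + I*(r:ℂ) + s))/2 +
        (3/2 - I*(r:ℂ) - s - (-1/2 - I*(r:ℂ) + s))/2) = (1:ℂ) by ring,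
      Complex.cpow_one]
  have hppow1 : (Real.pi : ℂ)^((1 + s - (2-s))/2) * (Real.pi : ℂ)^((1 + s - (2-s))/2) *
      ((Real.pi : ℂ)^((5/2 + I*(r:ℂ) - s - (1/2 + I*(r:ℂ) + s))/2) *
       (Real.pi : ℂ)^((5/2 - I*(r:ℂ) - s - (1/2 - I*(r:ℂ) + s))/2)) = (Real.pi : ℂ) := by
    rw [← Complex.cpow_add _ _ piC_ne, ← Complex.cpow_add _ _ piC_ne, ← Complex.cpow_add _ _ piC_ne,
      show (1 + s - (2-s))/2 + (1 + s - (2-s))/2 + ((5/2 + I*(r:ℂ) - s - (1/2 + I*(r:ℂ) + s))/2 +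
        (5/2 - I*(r:ℂ) - s - (1/2 - I*(r:ℂ) + s))/2) = (1:ℂ) by ring,
      Complex.cpow_one]
  have hconst0 : (2:ℂ)^s * (2:ℂ)^s * ((2:ℂ)^(3/2 - I*(r:ℂ) - s) * (2:ℂ)^(3/2 + I*(r:ℂ) - s)) *
      (((Real.sqrt Real.pi : ℝ) : ℂ) * ((Real.sqrt Real.pi : ℝ) : ℂ) *
        (((Real.sqrt Real.pi : ℝ) : ℂ) * ((Real.sqrt Real.pi : ℝ) : ℂ))) *
      ((Real.pi : ℂ)^((s - (1-s))/2) * (Real.pi : ℂ)^((s - (1-s))/2) *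
        ((Real.pi : ℂ)^((3/2 + I*(r:ℂ) - s - (-1/2 + I*(r:ℂ) + s))/2) *
         (Real.pi : ℂ)^((3/2 - I*(r:ℂ) - s - (-1/2 - I*(r:ℂ) + s))/2))) / (Real.pi : ℂ)^4
      = 8 / (Real.pi : ℂ) := by
    rw [hR2, h2pow, hppow0, div_eq_div_iff (pow_ne_zero 4 piC_ne) piC_ne]
    ring
  have hconst1 : (2:ℂ)^s * (2:ℂ)^s * ((2:ℂ)^(3/2 - I*(r:ℂ) - s) * (2:ℂ)^(3/2 + I*(r:ℂ) - s)) *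
      (((Real.sqrt Real.pi : ℝ) : ℂ) * ((Real.sqrt Real.pi : ℝ) : ℂ) *
        (((Real.sqrt Real.pi : ℝ) : ℂ) * ((Real.sqrt Real.pi : ℝ) : ℂ))) *
      ((Real.pi : ℂ)^((1 + s - (2-s))/2) * (Real.pi : ℂ)^((1 + s - (2-s))/2) *
        ((Real.pi : ℂ)^((5/2 + I*(r:ℂ) - s - (1/2 + I*(r:ℂ) + s))/2) *
         (Real.pi : ℂ)^((5/2 - I*(r:ℂ) - s - (1/2 - I*(r:ℂ) + s))/2))) / (Real.pi : ℂ)^4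
      = 8 / (Real.pi : ℂ) := by
    rw [hR2, h2pow, hppow1, div_eq_div_iff (pow_ne_zero 4 piC_ne) piC_ne]
    ring
  -- the two summands
  have h0 : (GammaR (1 - s))^2 / (GammaR s)^2 *
        (GammaR (-1/2 + I*r + s) / GammaR (3/2 + I*r - s)) *
        (GammaR (-1/2 - I*r + s) / GammaR (3/2 - I*r - s))
      = 8 / (Real.pi : ℂ) * Complex.sin ((Real.pi : ℂ) * ((2-s)/2))^2 *
          Complex.sin ((Real.pi : ℂ) * ((1/2 - I*r + s)/2)) *
          Complex.sin ((Real.pi : ℂ) * ((1/2 + I*r + s)/2)) *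
          (Complex.Gamma (1-s)^2 * Complex.Gamma (-1/2 + I*r + s) * Complex.Gamma (-1/2 - I*r + s)) := by
    rw [← div_pow, GammaR_div (1-s) s ((2-s)/2) (by ring) s1,
      GammaR_div (-1/2 + I*(r:ℂ) + s) (3/2 + I*(r:ℂ) - s) ((1/2 - I*(r:ℂ) + s)/2) (by ring) s2,
      GammaR_div (-1/2 - I*(r:ℂ) + s) (3/2 - I*(r:ℂ) - s) ((1/2 + I*(r:ℂ) + s)/2) (by ring) s3]
    calc ((Real.pi : ℂ)^((s - (1-s))/2) * Complex.Gamma ((1-s)/2) * Complex.Gamma ((2-s)/2) *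
          Complex.sin ((Real.pi : ℂ) * ((2-s)/2)) / (Real.pi : ℂ))^2 *
        ((Real.pi : ℂ)^((3/2 + I*(r:ℂ) - s - (-1/2 + I*(r:ℂ) + s))/2) *
          Complex.Gamma ((-1/2 + I*(r:ℂ) + s)/2) * Complex.Gamma ((1/2 - I*(r:ℂ) + s)/2) *
          Complex.sin ((Real.pi : ℂ) * ((1/2 - I*(r:ℂ) + s)/2)) / (Real.pi : ℂ)) *
        ((Real.pi : ℂ)^((3/2 - I*(r:ℂ) - s - (-1/2 - I*(r:ℂ) + s))/2) *
          Complex.Gamma ((-1/2 - I*(r:ℂ) + s)/2) * Complex.Gamma ((1/2 + I*(r:ℂ) + s)/2) *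
          Complex.sin ((Real.pi : ℂ) * ((1/2 + I*(r:ℂ) + s)/2)) / (Real.pi : ℂ))
        = (Complex.Gamma ((1-s)/2) * Complex.Gamma ((2-s)/2)) *
            (Complex.Gamma ((1-s)/2) * Complex.Gamma ((2-s)/2)) *
            (Complex.Gamma ((-1/2 + I*(r:ℂ) + s)/2) * Complex.Gamma ((1/2 + I*(r:ℂ) + s)/2)) *
            (Complex.Gamma ((-1/2 - I*(r:ℂ) + s)/2) * Complex.Gamma ((1/2 - I*(r:ℂ) + s)/2)) *
            ((Real.pi : ℂ)^((s - (1-s))/2) * (Real.pi : ℂ)^((s - (1-s))/2) *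
              ((Real.pi : ℂ)^((3/2 + I*(r:ℂ) - s - (-1/2 + I*(r:ℂ) + s))/2) *
               (Real.pi : ℂ)^((3/2 - I*(r:ℂ) - s - (-1/2 - I*(r:ℂ) + s))/2))) *
            (Complex.sin ((Real.pi : ℂ) * ((2-s)/2))^2 *
              Complex.sin ((Real.pi : ℂ) * ((1/2 - I*(r:ℂ) + s)/2)) *
              Complex.sin ((Real.pi : ℂ) * ((1/2 + I*(r:ℂ) + s)/2))) / (Real.pi : ℂ)^4 := by
          ring
      _ = 8 / (Real.pi : ℂ) * Complex.sin ((Real.pi : ℂ) * ((2-s)/2))^2 *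
          Complex.sin ((Real.pi : ℂ) * ((1/2 - I*r + s)/2)) *
          Complex.sin ((Real.pi : ℂ) * ((1/2 + I*r + s)/2)) *
          (Complex.Gamma (1-s)^2 * Complex.Gamma (-1/2 + I*r + s) * Complex.Gamma (-1/2 - I*r + s)) := by
          rw [dup1, dup2, dup3]
          linear_combination (Complex.Gamma (1-s)^2 * Complex.Gamma (-1/2 + I*(r:ℂ) + s) *
            Complex.Gamma (-1/2 - I*(r:ℂ) + s) *
            (Complex.sin ((Real.pi : ℂ) * ((2-s)/2))^2 *
              Complex.sin ((Real.pi : ℂ) * ((1/2 - I*(r:ℂ) + s)/2)) *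
              Complex.sin ((Real.pi : ℂ) * ((1/2 + I*(r:ℂ) + s)/2)))) * hconst0
  have h1 : (GammaR (2 - s))^2 / (GammaR (1 + s))^2 *
        (GammaR (1/2 + I*r + s) / GammaR (5/2 + I*r - s)) *
        (GammaR (1/2 - I*r + s) / GammaR (5/2 - I*r - s))
      = 8 / (Real.pi : ℂ) * Complex.sin ((Real.pi : ℂ) * ((1-s)/2))^2 *
          Complex.sin ((Real.pi : ℂ) * ((-1/2 - I*r + s)/2)) *
          Complex.sin ((Real.pi : ℂ) * ((-1/2 + I*r + s)/2)) *
          (Complex.Gamma (1-s)^2 * Complex.Gamma (-1/2 + I*r + s) * Complex.Gamma (-1/2 - I*r + s)) := by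
    rw [← div_pow, GammaR_div (2-s) (1+s) ((1-s)/2) (by ring) s4,
      GammaR_div (1/2 + I*(r:ℂ) + s) (5/2 + I*(r:ℂ) - s) ((-1/2 - I*(r:ℂ) + s)/2) (by ring) s5,
      GammaR_div (1/2 - I*(r:ℂ) + s) (5/2 - I*(r:ℂ) - s) ((-1/2 + I*(r:ℂ) + s)/2) (by ring) s6]
    calc ((Real.pi : ℂ)^((1 + s - (2-s))/2) * Complex.Gamma ((2-s)/2) * Complex.Gamma ((1-s)/2) *
          Complex.sin ((Real.pi : ℂ) * ((1-s)/2)) / (Real.pi : ℂ))^2 *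
        ((Real.pi : ℂ)^((5/2 + I*(r:ℂ) - s - (1/2 + I*(r:ℂ) + s))/2) *
          Complex.Gamma ((1/2 + I*(r:ℂ) + s)/2) * Complex.Gamma ((-1/2 - I*(r:ℂ) + s)/2) *
          Complex.sin ((Real.pi : ℂ) * ((-1/2 - I*(r:ℂ) + s)/2)) / (Real.pi : ℂ)) *
        ((Real.pi : ℂ)^((5/2 - I*(r:ℂ) - s - (1/2 - I*(r:ℂ) + s))/2) *
          Complex.Gamma ((1/2 - I*(r:ℂ) + s)/2) * Complex.Gamma ((-1/2 + I*(r:ℂ) + s)/2) *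
          Complex.sin ((Real.pi : ℂ) * ((-1/2 + I*(r:ℂ) + s)/2)) / (Real.pi : ℂ))
        = (Complex.Gamma ((1-s)/2) * Complex.Gamma ((2-s)/2)) *
            (Complex.Gamma ((1-s)/2) * Complex.Gamma ((2-s)/2)) *
            (Complex.Gamma ((-1/2 + I*(r:ℂ) + s)/2) * Complex.Gamma ((1/2 + I*(r:ℂ) + s)/2)) *
            (Complex.Gamma ((-1/2 - I*(r:ℂ) + s)/2) * Complex.Gamma ((1/2 - I*(r:ℂ) + s)/2)) *
            ((Real.pi : ℂ)^((1 + s - (2-s))/2) * (Real.pi : ℂ)^((1 + s - (2-s))/2) *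
              ((Real.pi : ℂ)^((5/2 + I*(r:ℂ) - s - (1/2 + I*(r:ℂ) + s))/2) *
               (Real.pi : ℂ)^((5/2 - I*(r:ℂ) - s - (1/2 - I*(r:ℂ) + s))/2))) *
            (Complex.sin ((Real.pi : ℂ) * ((1-s)/2))^2 *
              Complex.sin ((Real.pi : ℂ) * ((-1/2 - I*(r:ℂ) + s)/2)) *
              Complex.sin ((Real.pi : ℂ) * ((-1/2 + I*(r:ℂ) + s)/2))) / (Real.pi : ℂ)^4 := by
          ring
      _ = 8 / (Real.pi : ℂ) * Complex.sin ((Real.pi : ℂ) * ((1-s)/2))^2 *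
          Complex.sin ((Real.pi : ℂ) * ((-1/2 - I*r + s)/2)) *
          Complex.sin ((Real.pi : ℂ) * ((-1/2 + I*r + s)/2)) *
          (Complex.Gamma (1-s)^2 * Complex.Gamma (-1/2 + I*r + s) * Complex.Gamma (-1/2 - I*r + s)) := by
          rw [dup1, dup2, dup3]
          linear_combination (Complex.Gamma (1-s)^2 * Complex.Gamma (-1/2 + I*(r:ℂ) + s) *
            Complex.Gamma (-1/2 - I*(r:ℂ) + s) *
            (Complex.sin ((Real.pi : ℂ) * ((1-s)/2))^2 *
              Complex.sin ((Real.pi : ℂ) * ((-1/2 - I*(r:ℂ) + s)/2)) *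
              Complex.sin ((Real.pi : ℂ) * ((-1/2 + I*(r:ℂ) + s)/2)))) * hconst1
  rw [h0, h1, show ((Real.pi * r : ℝ) : ℂ) = (Real.pi : ℂ) * (r : ℂ) by push_cast; ring]
  linear_combination (Complex.Gamma (1-s)^2 * Complex.Gamma (-1/2 + I*(r:ℂ) + s) *
    Complex.Gamma (-1/2 - I*(r:ℂ) + s) / (Real.pi : ℂ)) * trigKey r s
end

section
/- Let r be a nonzero real number and s a complex number avoiding all poles of the gamma factors involved. Then Σ_{δ ∈ {0,1}} (−1)^δ [Γ_ℝ(1−s+δ)² / Γ_ℝ(s+δ)²] · Π_{±} [Γ_ℝ(−1/2 + δ ± ir + s) / Γ_ℝ(3/2 + δ ± ir − s)] = (4/π) · Γ(1−s)² · (sin(πs) − cosh(πr) cos(πs)) · Π_{±} Γ(−1/2 ± ir + s). -/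
set_option maxHeartbeats 1000000


open Complex

lemma GammaR_eq : GammaR = Complex.Gammaℝ := rfl

lemma cancel1 {x : ℂ} (a : ℂ) (hx : x ≠ 0) : x * (a * x⁻¹) = a := by
  field_simp

lemma helperT (A Cp Cm : ℂ) {gp gm : ℂ} (hp : gp ≠ 0) (hm : gm ≠ 0) :
    A * (gp * (Cm * gm⁻¹)) * (gm * (Cp * gp⁻¹)) = A * Cm * Cp := by
  field_simp

lemma cos_mul_cos (a b : ℂ) : Complex.cos a * Complex.cos b
    = (Complex.cos (a - b) + Complex.cos (a + b)) / 2 := by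
  rw [Complex.cos_sub, Complex.cos_add]; ring

lemma sin_mul_sin (a b : ℂ) : Complex.sin a * Complex.sin b
    = (Complex.cos (a - b) - Complex.cos (a + b)) / 2 := by
  rw [Complex.cos_sub, Complex.cos_add]; ring

lemma trig_key (r : ℝ) (s : ℂ) :
    Complex.sin ((Real.pi : ℂ)*s/2)^2 * (Complex.cos ((Real.pi : ℂ)*(-1/2 + I*r + s)/2) *
      Complex.cos ((Real.pi : ℂ)*(-1/2 - I*r + s)/2))
    - Complex.cos ((Real.pi : ℂ)*s/2)^2 * (Complex.sin ((Real.pi : ℂ)*(-1/2 + I*r + s)/2) *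
      Complex.sin ((Real.pi : ℂ)*(-1/2 - I*r + s)/2))
    = (Complex.sin ((Real.pi : ℂ) * s)
        - Complex.cosh ((Real.pi * r : ℝ) : ℂ) * Complex.cos ((Real.pi : ℂ) * s)) / 2 := by
  have hd : (Real.pi : ℂ)*(-1/2 + I*r + s)/2 - (Real.pi : ℂ)*(-1/2 - I*r + s)/2
      = ((Real.pi : ℂ) * r) * I := by ring
  have hsum : (Real.pi : ℂ)*(-1/2 + I*r + s)/2 + (Real.pi : ℂ)*(-1/2 - I*r + s)/2
      = -((Real.pi : ℂ)/2 - (Real.pi : ℂ)*s) := by ring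
  rw [cos_mul_cos, sin_mul_sin, hd, hsum, Complex.cos_mul_I, Complex.cos_neg,
    Complex.cos_pi_div_two_sub]
  have hC : Complex.cosh ((Real.pi * r : ℝ) : ℂ) = Complex.cosh ((Real.pi : ℂ) * r) := by
    push_cast; ring_nf
  have hpyth := Complex.sin_sq_add_cos_sq ((Real.pi : ℂ)*s/2)
  have hcos : Complex.cos ((Real.pi : ℂ)*s) = 2*Complex.cos ((Real.pi : ℂ)*s/2)^2 - 1 := by
    have h := Complex.cos_two_mul ((Real.pi : ℂ)*s/2)
    rwa [show 2*((Real.pi : ℂ)*s/2) = (Real.pi : ℂ)*s by ring] at h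
  rw [hC]
  linear_combination (Complex.sin ((Real.pi : ℂ)*s)/2
      + Complex.cosh ((Real.pi : ℂ) * r)/2) * hpyth
    + (Complex.cosh ((Real.pi : ℂ) * r)/2) * hcos

/-- Signed gamma-factor identity from the appendix:
`Σ_{δ∈{0,1}} (−1)^δ Γ_ℝ(1−s+δ)²/Γ_ℝ(s+δ)² · Π_± Γ_ℝ(−1/2+δ±ir+s)/Γ_ℝ(3/2+δ±ir−s)
 = (4/π) Γ(1−s)² (sin(πs) − cosh(πr) cos(πs)) Π_± Γ(−1/2±ir+s)`. -/
theorem stmt2 (r : ℝ) (hr : r ≠ 0) (s : ℂ)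
    (hGR : ∀ w ∈ ({1 - s, s, -1/2 + I*r + s, -1/2 - I*r + s, 3/2 + I*r - s, 3/2 - I*r - s,
        2 - s, 1 + s, 1/2 + I*r + s, 1/2 - I*r + s, 5/2 + I*r - s, 5/2 - I*r - s} : Set ℂ),
      ∀ n : ℕ, w ≠ -(2*n : ℂ))
    (hG : ∀ w ∈ ({1 - s, -1/2 + I*r + s, -1/2 - I*r + s} : Set ℂ), ∀ n : ℕ, w ≠ -(n : ℂ)) :
    (GammaR (1 - s))^2 / (GammaR s)^2 *
        (GammaR (-1/2 + I*r + s) / GammaR (3/2 + I*r - s)) *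
        (GammaR (-1/2 - I*r + s) / GammaR (3/2 - I*r - s))
      - (GammaR (2 - s))^2 / (GammaR (1 + s))^2 *
        (GammaR (1/2 + I*r + s) / GammaR (5/2 + I*r - s)) *
        (GammaR (1/2 - I*r + s) / GammaR (5/2 - I*r - s))
    = (4 / (Real.pi : ℂ)) * (Complex.Gamma (1 - s))^2 *
        (Complex.sin ((Real.pi : ℂ) * s)
          - Complex.cosh ((Real.pi * r : ℝ) : ℂ) * Complex.cos ((Real.pi : ℂ) * s)) *
        Complex.Gamma (-1/2 + I*r + s) * Complex.Gamma (-1/2 - I*r + s) := by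
  rw [GammaR_eq]
  have hpi : (Real.pi : ℂ) ≠ 0 := Complex.ofReal_ne_zero.mpr Real.pi_ne_zero
  have h2pi : (2 * (Real.pi : ℂ)) ≠ 0 := by
    exact mul_ne_zero two_ne_zero hpi
  -- nonvanishing facts
  have hne : ∀ w ∈ ({1 - s, s, -1/2 + I*r + s, -1/2 - I*r + s, 3/2 + I*r - s, 3/2 - I*r - s,
        2 - s, 1 + s, 1/2 + I*r + s, 1/2 - I*r + s, 5/2 + I*r - s, 5/2 - I*r - s} : Set ℂ),
      Complex.Gammaℝ w ≠ 0 := by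
    intro w hw
    rw [Ne, Complex.Gammaℝ_eq_zero_iff]
    rintro ⟨n, hn⟩
    exact hGR w hw n hn
  have n1 : Complex.Gammaℝ (1 - s) ≠ 0 := hne _ (by simp)
  have n2 : Complex.Gammaℝ (2 - s) ≠ 0 := hne _ (by simp)
  have n3p : Complex.Gammaℝ (-1/2 + I*r + s) ≠ 0 := hne _ (by simp)
  have n3m : Complex.Gammaℝ (-1/2 - I*r + s) ≠ 0 := hne _ (by simp)
  have n4p : Complex.Gammaℝ (1/2 + I*r + s) ≠ 0 := hne _ (by simp)
  have n4m : Complex.Gammaℝ (1/2 - I*r + s) ≠ 0 := hne _ (by simp)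
  -- reflection facts
  have hG1 : ∀ n : ℕ, (1 - s) ≠ -(n : ℂ) := hG _ (by simp)
  have hGp : ∀ n : ℕ, (-1/2 + I*r + s) ≠ -(n : ℂ) := hG _ (by simp)
  have hGm : ∀ n : ℕ, (-1/2 - I*r + s) ≠ -(n : ℂ) := hG _ (by simp)
  have B1 : (Complex.Gammaℝ s)⁻¹ = Complex.Gammaℂ (1 - s) *
      Complex.cos ((Real.pi : ℂ) * (1 - s) / 2) * (Complex.Gammaℝ (1 - s))⁻¹ := by
    have := Complex.inv_Gammaℝ_one_sub hG1
    rwa [show (1 : ℂ) - (1 - s) = s by ring] at this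
  have B2 : (Complex.Gammaℝ (1 + s))⁻¹ = Complex.Gammaℂ (1 - s) *
      Complex.sin ((Real.pi : ℂ) * (1 - s) / 2) * (Complex.Gammaℝ (2 - s))⁻¹ := by
    have := Complex.inv_Gammaℝ_two_sub hG1
    rwa [show (2 : ℂ) - (1 - s) = 1 + s by ring, show (1 : ℂ) - s + 1 = 2 - s by ring] at this
  have B3 : (Complex.Gammaℝ (3/2 + I*r - s))⁻¹ = Complex.Gammaℂ (-1/2 - I*r + s) *
      Complex.cos ((Real.pi : ℂ) * (-1/2 - I*r + s) / 2) *
      (Complex.Gammaℝ (-1/2 - I*r + s))⁻¹ := by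
    have := Complex.inv_Gammaℝ_one_sub hGm
    rwa [show (1 : ℂ) - (-1/2 - I*r + s) = 3/2 + I*r - s by ring] at this
  have B4 : (Complex.Gammaℝ (3/2 - I*r - s))⁻¹ = Complex.Gammaℂ (-1/2 + I*r + s) *
      Complex.cos ((Real.pi : ℂ) * (-1/2 + I*r + s) / 2) *
      (Complex.Gammaℝ (-1/2 + I*r + s))⁻¹ := by
    have := Complex.inv_Gammaℝ_one_sub hGp
    rwa [show (1 : ℂ) - (-1/2 + I*r + s) = 3/2 - I*r - s by ring] at this
  have B5 : (Complex.Gammaℝ (5/2 + I*r - s))⁻¹ = Complex.Gammaℂ (-1/2 - I*r + s) *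
      Complex.sin ((Real.pi : ℂ) * (-1/2 - I*r + s) / 2) *
      (Complex.Gammaℝ (1/2 - I*r + s))⁻¹ := by
    have := Complex.inv_Gammaℝ_two_sub hGm
    rwa [show (2 : ℂ) - (-1/2 - I*r + s) = 5/2 + I*r - s by ring,
      show (-1/2 : ℂ) - I*r + s + 1 = 1/2 - I*r + s by ring] at this
  have B6 : (Complex.Gammaℝ (5/2 - I*r - s))⁻¹ = Complex.Gammaℂ (-1/2 + I*r + s) *
      Complex.sin ((Real.pi : ℂ) * (-1/2 + I*r + s) / 2) *
      (Complex.Gammaℝ (1/2 + I*r + s))⁻¹ := by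
    have := Complex.inv_Gammaℝ_two_sub hGp
    rwa [show (2 : ℂ) - (-1/2 + I*r + s) = 5/2 - I*r - s by ring,
      show (-1/2 : ℂ) + I*r + s + 1 = 1/2 + I*r + s by ring] at this
  -- first term
  have T1 : (Complex.Gammaℝ (1 - s))^2 / (Complex.Gammaℝ s)^2 *
        (Complex.Gammaℝ (-1/2 + I*r + s) / Complex.Gammaℝ (3/2 + I*r - s)) *
        (Complex.Gammaℝ (-1/2 - I*r + s) / Complex.Gammaℝ (3/2 - I*r - s))
      = Complex.Gammaℂ (1 - s)^2 * Complex.cos ((Real.pi : ℂ) * (1 - s) / 2)^2 *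
        (Complex.Gammaℂ (-1/2 + I*r + s) * Complex.Gammaℂ (-1/2 - I*r + s)) *
        (Complex.cos ((Real.pi : ℂ) * (-1/2 + I*r + s) / 2) *
          Complex.cos ((Real.pi : ℂ) * (-1/2 - I*r + s) / 2)) := by
    rw [div_eq_mul_inv ((Complex.Gammaℝ (1 - s))^2),
      div_eq_mul_inv (Complex.Gammaℝ (-1/2 + I*r + s)),
      div_eq_mul_inv (Complex.Gammaℝ (-1/2 - I*r + s)), ← inv_pow, B1, B3, B4,
      ← mul_pow, cancel1 _ n1, helperT _ _ _ n3p n3m]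
    ring
  have T2 : (Complex.Gammaℝ (2 - s))^2 / (Complex.Gammaℝ (1 + s))^2 *
        (Complex.Gammaℝ (1/2 + I*r + s) / Complex.Gammaℝ (5/2 + I*r - s)) *
        (Complex.Gammaℝ (1/2 - I*r + s) / Complex.Gammaℝ (5/2 - I*r - s))
      = Complex.Gammaℂ (1 - s)^2 * Complex.sin ((Real.pi : ℂ) * (1 - s) / 2)^2 *
        (Complex.Gammaℂ (-1/2 + I*r + s) * Complex.Gammaℂ (-1/2 - I*r + s)) *
        (Complex.sin ((Real.pi : ℂ) * (-1/2 + I*r + s) / 2) *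
          Complex.sin ((Real.pi : ℂ) * (-1/2 - I*r + s) / 2)) := by
    rw [div_eq_mul_inv ((Complex.Gammaℝ (2 - s))^2),
      div_eq_mul_inv (Complex.Gammaℝ (1/2 + I*r + s)),
      div_eq_mul_inv (Complex.Gammaℝ (1/2 - I*r + s)), ← inv_pow, B2, B5, B6,
      ← mul_pow, cancel1 _ n2, helperT _ _ _ n4p n4m]
    ring
  rw [T1, T2]
  -- trig simplifications
  have c1 : Complex.cos ((Real.pi : ℂ) * (1 - s) / 2) = Complex.sin ((Real.pi : ℂ) * s / 2) := by
    rw [show (Real.pi : ℂ) * (1 - s) / 2 = (Real.pi : ℂ)/2 - (Real.pi : ℂ)*s/2 by ring,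
      Complex.cos_pi_div_two_sub]
  have s1 : Complex.sin ((Real.pi : ℂ) * (1 - s) / 2) = Complex.cos ((Real.pi : ℂ) * s / 2) := by
    rw [show (Real.pi : ℂ) * (1 - s) / 2 = (Real.pi : ℂ)/2 - (Real.pi : ℂ)*s/2 by ring,
      Complex.sin_pi_div_two_sub]
  rw [c1, s1]
  -- gamma product
  have hGC : Complex.Gammaℂ (1 - s)^2 * (Complex.Gammaℂ (-1/2 + I*r + s) *
      Complex.Gammaℂ (-1/2 - I*r + s))
      = 8 / (Real.pi : ℂ) * (Complex.Gamma (1 - s))^2 * Complex.Gamma (-1/2 + I*r + s) *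
        Complex.Gamma (-1/2 - I*r + s) := by
    simp only [Complex.Gammaℂ_def]
    have hc : (2*(Real.pi : ℂ))^(-(1 - s)) * (2*(Real.pi : ℂ))^(-(1 - s)) *
        ((2*(Real.pi : ℂ))^(-(-1/2 + I*r + s)) * (2*(Real.pi : ℂ))^(-(-1/2 - I*r + s)))
        = (2*(Real.pi : ℂ))⁻¹ := by
      rw [← Complex.cpow_add _ _ h2pi, ← Complex.cpow_add _ _ h2pi,
        ← Complex.cpow_add _ _ h2pi,
        show -(1 - s) + -(1 - s) + (-(-1/2 + I*(r:ℂ) + s) + -(-1/2 - I*(r:ℂ) + s)) = (-1 : ℂ)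
          by ring, Complex.cpow_neg_one]
    calc (2 * (2*(Real.pi : ℂ))^(-(1 - s)) * Complex.Gamma (1 - s))^2 *
          (2 * (2*(Real.pi : ℂ))^(-(-1/2 + I*r + s)) * Complex.Gamma (-1/2 + I*r + s) *
            (2 * (2*(Real.pi : ℂ))^(-(-1/2 - I*r + s)) * Complex.Gamma (-1/2 - I*r + s)))
        = 16 * ((2*(Real.pi : ℂ))^(-(1 - s)) * (2*(Real.pi : ℂ))^(-(1 - s)) *
            ((2*(Real.pi : ℂ))^(-(-1/2 + I*r + s)) * (2*(Real.pi : ℂ))^(-(-1/2 - I*r + s)))) *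
            (Complex.Gamma (1 - s))^2 * Complex.Gamma (-1/2 + I*r + s) *
            Complex.Gamma (-1/2 - I*r + s) := by ring
      _ = _ := by
          rw [hc]
          have h8 : (16:ℂ) * (2*(Real.pi : ℂ))⁻¹ = 8 / (Real.pi : ℂ) := by
            rw [div_eq_mul_inv, mul_inv]
            ring
          linear_combination ((Complex.Gamma (1 - s))^2 * Complex.Gamma (-1/2 + I*r + s) *
            Complex.Gamma (-1/2 - I*r + s)) * h8
  have key := trig_key r s
  linear_combination (Complex.Gammaℂ (1 - s)^2 * (Complex.Gammaℂ (-1/2 + I*r + s) *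
      Complex.Gammaℂ (-1/2 - I*r + s))) * key
    + ((Complex.sin ((Real.pi : ℂ) * s) - Complex.cosh ((Real.pi * r : ℝ) : ℂ) *
        Complex.cos ((Real.pi : ℂ) * s)) / 2) * hGC
end

section
/- Let φ : ℝ → ℂ be a smooth compactly supported function with 0 not in the support of φ, and define V : ℝ → ℂ by V(t) = ∫_{ℝ \ {0}} φ(z) |z|^{1/2 − it} dz/|z|. Then for every real number a, ∫_{ℝ} V(t) cos(t a) dt = π Σ_{σ₁, σ₂ ∈ {±1}} e^{σ₁ a / 2} φ(σ₂ e^{σ₁ a}). -/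
open Complex MeasureTheory

section aux
open Real FourierTransform

noncomputable def toSch (f : ℝ → ℂ) (h1 : ContDiff ℝ (⊤ : ℕ∞) f) (h2 : HasCompactSupport f) :
    SchwartzMap ℝ ℂ where
  toFun := f
  smooth' := h1.of_le (by simp)
  decay' := by
    intro k n
    obtain ⟨C, hC⟩ := Continuous.bounded_above_of_compact_support
      ((continuous_norm.pow k).mul ((h1.continuous_iteratedFDeriv (by exact_mod_cast le_top)).norm))
      (((h2.iteratedFDeriv n).norm).mul_left)
    exact ⟨C, fun x => (Real.le_norm_self _).trans (hC x)⟩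

variable (φ : ℝ → ℂ)

noncomputable def psi (u : ℝ) : ℂ :=
  ((Real.exp (u/2) : ℝ) : ℂ) * (φ (Real.exp u) + φ (-Real.exp u))

lemma psi_smooth (hφ : ContDiff ℝ (⊤ : ℕ∞) φ) : ContDiff ℝ (⊤ : ℕ∞) (psi φ) := by
  refine ContDiff.mul ?_ ?_
  · exact Complex.ofRealCLM.contDiff.comp (Real.contDiff_exp.comp (contDiff_id.div_const 2))
  · exact (hφ.comp Real.contDiff_exp).add (hφ.comp Real.contDiff_exp.neg)

lemma psi_supp (hc : HasCompactSupport φ) (h0 : 0 ∉ tsupport φ) :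
    HasCompactSupport (psi φ) := by
  obtain ⟨ε, εpos, hball⟩ := Metric.isOpen_iff.1 (isClosed_tsupport φ).isOpen_compl 0 h0
  obtain ⟨R, hR⟩ := hc.isBounded.subset_closedBall 0
  apply HasCompactSupport.intro (isCompact_Icc (a := Real.log ε) (b := Real.log R))
  intro u hu
  have key : ∀ x : ℝ, |x| = Real.exp u → φ x = 0 := by
    intro x hx
    by_contra hne
    have hmem : x ∈ tsupport φ := subset_tsupport φ hne
    have h1 : ε ≤ Real.exp u := by
      by_contra h
      push_neg at h
      exact hball (by simpa [Real.dist_eq, hx] using h) hmem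
    have h2 : Real.exp u ≤ R := by
      have := hR hmem
      simpa [Real.dist_eq, hx] using this
    refine hu ⟨?_, ?_⟩
    · calc Real.log ε ≤ Real.log (Real.exp u) := Real.log_le_log εpos h1
        _ = u := Real.log_exp u
    · calc u = Real.log (Real.exp u) := (Real.log_exp u).symm
        _ ≤ Real.log R := Real.log_le_log (Real.exp_pos u) h2
  have e1 := key (Real.exp u) (abs_of_pos (Real.exp_pos u))
  have e2 := key (-Real.exp u) (by rw [abs_neg]; exact abs_of_pos (Real.exp_pos u))
  simp [psi, e1, e2]

lemma cont_integrand (hφ : ContDiff ℝ (⊤ : ℕ∞) φ) (h0 : 0 ∉ tsupport φ) (c : ℂ) :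
    Continuous (fun z : ℝ => φ z * ((|z| : ℝ) : ℂ) ^ c / ((|z| : ℝ) : ℂ)) := by
  obtain ⟨ε, εpos, hball⟩ := Metric.isOpen_iff.1 (isClosed_tsupport φ).isOpen_compl 0 h0
  rw [continuous_iff_continuousAt]
  intro z
  rcases eq_or_ne z 0 with rfl | hz
  · have hev : (fun z : ℝ => φ z * ((|z| : ℝ) : ℂ) ^ c / ((|z| : ℝ) : ℂ)) =ᶠ[nhds 0]
        (fun _ => 0) := by
      filter_upwards [Metric.ball_mem_nhds 0 εpos] with x hx
      have : φ x = 0 := by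
        by_contra h
        exact hball hx (subset_tsupport φ h)
      simp [this]
    exact (continuousAt_congr hev).2 continuousAt_const
  · have hb : ((|z| : ℝ) : ℂ) ≠ 0 := by simp [abs_ne_zero, hz]
    have h1 : ContinuousAt (fun z : ℝ => ((|z| : ℝ) : ℂ)) z :=
      (Complex.continuous_ofReal.comp (_root_.continuous_abs)).continuousAt
    have h2 : ContinuousAt (fun z : ℝ => ((|z| : ℝ) : ℂ) ^ c) z := by
      apply h1.cpow continuousAt_const
      rw [Complex.mem_slitPlane_iff]
      left
      simpa using abs_pos.2 hz
    exact ((hφ.continuous.continuousAt.mul h2).div h1 hb)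

lemma integrable_integrand (hφ : ContDiff ℝ (⊤ : ℕ∞) φ) (hc : HasCompactSupport φ)
    (h0 : 0 ∉ tsupport φ) (c : ℂ) :
    Integrable (fun z : ℝ => φ z * ((|z| : ℝ) : ℂ) ^ c / ((|z| : ℝ) : ℂ)) := by
  apply (cont_integrand φ hφ h0 c).integrable_of_hasCompactSupport
  apply HasCompactSupport.intro hc
  intro z hz
  rw [image_eq_zero_of_notMem_tsupport hz]
  simp

lemma change_var (hφ : ContDiff ℝ (⊤ : ℕ∞) φ) (hc : HasCompactSupport φ)
    (h0 : 0 ∉ tsupport φ) (c : ℂ) :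
    (∫ z : ℝ, φ z * ((|z| : ℝ) : ℂ) ^ c / ((|z| : ℝ) : ℂ))
      = ∫ u : ℝ, (φ (Real.exp u) + φ (-Real.exp u)) * Complex.exp (↑u * c) := by
  set F := fun z : ℝ => φ z * ((|z| : ℝ) : ℂ) ^ c / ((|z| : ℝ) : ℂ) with hF
  have hFi := integrable_integrand φ hφ hc h0 c
  have step1 : (∫ z : ℝ, F z) = (∫ z in Set.Iic (0:ℝ), F z) + ∫ z in Set.Ioi (0:ℝ), F z :=
    (intervalIntegral.integral_Iic_add_Ioi hFi.integrableOn hFi.integrableOn).symm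
  have step2 : (∫ z in Set.Iic (0:ℝ), F z) = ∫ x in Set.Ioi (0:ℝ), F (-x) := by
    rw [integral_comp_neg_Ioi, neg_zero]
  have hg : ∀ x ∈ Set.Ioi (0:ℝ), F (-x) + F x
      = (φ x + φ (-x)) * ((x : ℂ) ^ c / (x : ℂ)) := by
    intro x hx
    have hx' : (0:ℝ) < x := hx
    simp only [hF, abs_neg, abs_of_pos hx']
    ring
  have step3 : (∫ x in Set.Ioi (0:ℝ), F (-x)) + (∫ x in Set.Ioi (0:ℝ), F x)
      = ∫ x in Set.Ioi (0:ℝ), (φ x + φ (-x)) * ((x : ℂ) ^ c / (x : ℂ)) := by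
    rw [← integral_add (hFi.comp_neg.integrableOn) hFi.integrableOn]
    exact setIntegral_congr_fun measurableSet_Ioi hg
  have himg : Set.Ioi (0:ℝ) = Real.exp '' Set.univ := by
    rw [Set.image_univ, Real.range_exp]
  have step4 : (∫ x in Set.Ioi (0:ℝ), (φ x + φ (-x)) * ((x : ℂ) ^ c / (x : ℂ)))
      = ∫ u : ℝ, (φ (Real.exp u) + φ (-Real.exp u)) * Complex.exp (↑u * c) := by
    rw [himg, integral_image_eq_integral_abs_deriv_smul MeasurableSet.univ
      (fun x _ => (Real.hasDerivAt_exp x).hasDerivWithinAt) Real.exp_injective.injOn,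
      setIntegral_univ]
    apply integral_congr_ae
    filter_upwards with u
    have hne : ((Real.exp u : ℝ) : ℂ) ≠ 0 := by
      simp [Real.exp_ne_zero]
    have hcpow : ((Real.exp u : ℝ) : ℂ) ^ c = Complex.exp (↑u * c) := by
      rw [Complex.cpow_def_of_ne_zero hne]
      congr 1
      rw [Complex.ofReal_exp, Complex.log_exp] <;>
        simp [Real.pi_pos, Real.pi_nonneg]
    rw [abs_of_pos (Real.exp_pos u), Complex.real_smul, hcpow, Complex.ofReal_exp]
    field_simp
  rw [hF] at step1 ⊢
  rw [step1, step2, step3, step4]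

lemma four_eq (t : ℝ) :
    𝓕 (psi φ) (t/(2*Real.pi))
      = ∫ u : ℝ, (φ (Real.exp u) + φ (-Real.exp u))
          * Complex.exp (↑u * ((1/2 : ℂ) - I*t)) := by
  rw [Real.fourier_real_eq_integral_exp_smul]
  apply integral_congr_ae
  filter_upwards with u
  rw [psi, smul_eq_mul, Complex.ofReal_exp]
  rw [show Complex.exp (↑(-2 * Real.pi * u * (t / (2 * Real.pi))) * I)
        * (Complex.exp ↑(u/2) * (φ (Real.exp u) + φ (-Real.exp u)))
      = (φ (Real.exp u) + φ (-Real.exp u))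
        * (Complex.exp (↑(-2 * Real.pi * u * (t / (2 * Real.pi))) * I)
            * Complex.exp ↑(u/2)) from by ring, ← Complex.exp_add]
  congr 1
  have harg : (-2 * Real.pi * u * (t / (2 * Real.pi)) : ℝ) = -(u*t) := by
    field_simp
  rw [harg]
  push_cast
  ring

end aux

/-- Evaluation of the inner integral of Motohashi's transform: with
`V(t) = ∫_{ℝ×} φ(z) |z|^{1/2−it} dz/|z|` for smooth compactly supported `φ`
vanishing near `0`, one has
`∫_ℝ V(t) cos(ta) dt = π Σ_{σ₁,σ₂∈{±1}} e^{σ₁a/2} φ(σ₂ e^{σ₁ a})`. -/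
theorem stmt6 (φ : ℝ → ℂ) (hφ : ContDiff ℝ (⊤ : ℕ∞) φ) (hc : HasCompactSupport φ)
    (h0 : 0 ∉ tsupport φ) (a : ℝ) :
    (∫ t : ℝ, (∫ z : ℝ, φ z * ((|z| : ℝ) : ℂ) ^ ((1/2 : ℂ) - I*t) / ((|z| : ℝ) : ℂ))
        * ((Real.cos (t*a) : ℝ) : ℂ))
      = (Real.pi : ℂ) *
        (((Real.exp (a/2) : ℝ) : ℂ) * (φ (Real.exp a) + φ (-Real.exp a))
          + ((Real.exp (-a/2) : ℝ) : ℂ) * (φ (Real.exp (-a)) + φ (-Real.exp (-a)))) := by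
  classical
  open Real FourierTransform in
  have hψs := psi_smooth φ hφ
  have hψc := psi_supp φ hc h0
  have hψi : Integrable (psi φ) := hψs.continuous.integrable_of_hasCompactSupport hψc
  have hFi : Integrable (𝓕 (psi φ)) := by
    have h := (SchwartzMap.fourierTransformCLM ℂ (toSch (psi φ) hψs hψc)).integrable (μ := volume)
    have heq : ⇑(SchwartzMap.fourierTransformCLM ℂ (toSch (psi φ) hψs hψc)) = 𝓕 (psi φ) := by
      rw [SchwartzMap.fourierTransformCLM_apply]
      rfl
    rwa [heq] at h
  have hinv : 𝓕⁻ (𝓕 (psi φ)) = psi φ :=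
    hψs.continuous.fourierInv_fourier_eq hψi hFi
  have h2π : (0:ℝ) < 2*Real.pi := by positivity
  have hVG : (fun t : ℝ => (∫ z : ℝ, φ z * ((|z| : ℝ) : ℂ) ^ ((1/2 : ℂ) - I*t) / ((|z| : ℝ) : ℂ))
        * ((Real.cos (t*a) : ℝ) : ℂ))
      = fun t : ℝ => (fun s : ℝ => 𝓕 (psi φ) s * ((Real.cos (2*Real.pi*s*a) : ℝ) : ℂ)) (t/(2*Real.pi)) := by
    funext t
    simp only
    rw [change_var φ hφ hc h0 ((1/2 : ℂ) - I*t), ← four_eq φ t]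
    rw [show 2*Real.pi*(t/(2*Real.pi))*a = t*a from by field_simp]
  rw [hVG, MeasureTheory.Measure.integral_comp_div (fun s : ℝ => 𝓕 (psi φ) s * ((Real.cos (2*Real.pi*s*a) : ℝ) : ℂ)) (2*Real.pi)]
  set W := 𝓕 (psi φ) with hW
  have key : ∀ s : ℝ, W s * ((Real.cos (2*Real.pi*s*a) : ℝ) : ℂ)
      = (Complex.exp (↑(-2 * Real.pi * s * (-a)) * I) • W s) / 2
        + (Complex.exp (↑(-2 * Real.pi * s * a) * I) • W s) / 2 := by
    intro s
    rw [Complex.ofReal_cos, Complex.cos]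
    simp only [smul_eq_mul]
    have e1 : ((-2 * Real.pi * s * (-a) : ℝ) : ℂ) = ((2*Real.pi*s*a : ℝ) : ℂ) := by
      push_cast; ring
    have e2 : ((-2 * Real.pi * s * a : ℝ) : ℂ) * I = -(((2*Real.pi*s*a : ℝ) : ℂ)) * I := by
      push_cast; ring
    rw [e1, e2]
    ring
  simp only [key]
  have hb : ∀ w : ℝ, Integrable (fun s : ℝ => Complex.exp (↑(-2 * Real.pi * s * w) * I) • W s) := by
    intro w
    simp_rw [smul_eq_mul]
    apply hFi.bdd_mul (c := 1)
    · apply Continuous.aestronglyMeasurable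
      exact Complex.continuous_exp.comp
        ((Complex.continuous_ofReal.comp (by continuity)).mul continuous_const)
    · refine Filter.Eventually.of_forall (fun s => ?_)
      rw [Complex.norm_exp]
      simp
  rw [integral_add ((hb (-a)).div_const 2) ((hb a).div_const 2), integral_div, integral_div]
  have hfou : ∀ w : ℝ, (∫ s : ℝ, Complex.exp (↑(-2 * Real.pi * s * w) * I) • W s) = psi φ (-w) := by
    intro w
    rw [← Real.fourier_real_eq_integral_exp_smul]
    rw [show 𝓕 W w = 𝓕⁻ W (-w) from by
      rw [Real.fourierInv_eq_fourier_neg, neg_neg], hW, hinv]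
  rw [hfou, hfou, neg_neg]
  rw [abs_of_pos h2π]
  simp only [psi]
  rw [Complex.real_smul]
  push_cast
  ring
end

section
/- Let A ≥ 2 and let r, r' be real numbers. Then there is a constant C = C(A) such that ∫_{ℝ} [(1 + |t|)^{3/2} / ((1 + |t − r'|)(1 + |t + r'|))^{5/4}] · (1 + |r + t|)^{−A} dt ≤ C · (1 + |r|)^{3/2} / ((1 + |r − r'|)(1 + |r + r'|))^{5/4} + C · (1 + |r|)^{−A+3}. -/
open MeasureTheory
open Module


noncomputable def Cp (p : ℝ) : ℝ := ∫ t : ℝ, (1 + |t|) ^ (-p)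

lemma Cp_nonneg (p : ℝ) : 0 ≤ Cp p :=
  integral_nonneg fun t => Real.rpow_nonneg (by positivity) _

lemma integrable_base {p : ℝ} (hp : 1 < p) :
    Integrable (fun t : ℝ => (1 + |t|) ^ (-p)) := by
  have h : ((finrank ℝ ℝ : ℝ)) < p := by simpa using hp
  simpa [Real.norm_eq_abs] using integrable_one_add_norm (E := ℝ) h

lemma integrable_shift {p : ℝ} (hp : 1 < p) (c : ℝ) :
    Integrable (fun t : ℝ => (1 + |t + c|) ^ (-p)) :=
  (integrable_base hp).comp_add_right c

lemma integral_shift (p c : ℝ) :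
    (∫ t : ℝ, (1 + |t + c|) ^ (-p)) = Cp p :=
  integral_add_right_eq_self (fun t : ℝ => (1 + |t|) ^ (-p)) c

lemma half_rpow_le {m x p : ℝ} (hp : 0 ≤ p) (hx : (1 + |m|) / 2 ≤ x) :
    x ^ (-p) ≤ 2 ^ p * (1 + |m|) ^ (-p) := by
  have h1 : (0:ℝ) < (1 + |m|) / 2 := by positivity
  have h2 := Real.rpow_le_rpow_of_nonpos h1 hx (neg_nonpos.2 hp)
  refine h2.trans_eq ?_
  rw [Real.div_rpow (by positivity) (by norm_num), Real.rpow_neg (by norm_num : (0:ℝ) ≤ 2)]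
  field_simp

lemma one_le_oaa (x : ℝ) : (1:ℝ) ≤ 1 + |x| := le_add_of_nonneg_right (abs_nonneg x)

lemma conv_lemma {A : ℝ} (hA : 2 ≤ A) (a b : ℝ) :
    (∫ t : ℝ, (1 + |t + a|) ^ (-(5/4 : ℝ)) * (1 + |b + t|) ^ (-A))
      ≤ 2 ^ (5/4 : ℝ) * (Cp 2 + Cp (5/4)) * (1 + |a - b|) ^ (-(5/4 : ℝ)) := by
  set m := a - b with hm
  set c : ℝ := 2 ^ (5/4 : ℝ) * (1 + |m|) ^ (-(5/4 : ℝ)) with hc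
  have hc0 : 0 ≤ c := by positivity
  set h : ℝ → ℝ := fun t => (1 + |t + a|) ^ (-(5/4 : ℝ)) * (1 + |b + t|) ^ (-A) with hh
  have h_nonneg : ∀ t, 0 ≤ h t := fun t =>
    mul_nonneg (Real.rpow_nonneg (by positivity) _) (Real.rpow_nonneg (by positivity) _)
  have h_meas : Measurable h := by fun_prop
  have hint54 : Integrable (fun t : ℝ => (1 + |t + a|) ^ (-(5/4:ℝ))) :=
    integrable_shift (by norm_num) a
  have heqb : ∀ q : ℝ, (fun t : ℝ => (1 + |b + t|) ^ (-q)) = fun t => (1 + |t + b|) ^ (-q) :=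
    fun q => funext fun t => by rw [add_comm b t]
  have hintb2 : Integrable (fun t : ℝ => (1 + |b + t|) ^ (-(2:ℝ))) := by
    rw [heqb]; exact integrable_shift (by norm_num) b
  have h_int : Integrable h := by
    refine hint54.mono' h_meas.aestronglyMeasurable (Filter.Eventually.of_forall fun t => ?_)
    rw [Real.norm_eq_abs, abs_of_nonneg (h_nonneg t)]
    have h1 : (1 + |b + t|) ^ (-A) ≤ 1 :=
      Real.rpow_le_one_of_one_le_of_nonpos (one_le_oaa _) (by linarith)
    calc h t ≤ (1 + |t + a|) ^ (-(5/4:ℝ)) * 1 :=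
          mul_le_mul_of_nonneg_left h1 (Real.rpow_nonneg (by positivity) _)
      _ = _ := mul_one _
  set S : Set ℝ := {t | |b + t| ≤ |m| / 2} with hSdef
  have hSm : MeasurableSet S := measurableSet_le (by fun_prop) measurable_const
  have split : (∫ t, h t) = (∫ t in S, h t) + ∫ t in Sᶜ, h t := (integral_add_compl hSm h_int).symm
  have hboundS : ∀ t ∈ S, h t ≤ c * (1 + |b + t|) ^ (-(2:ℝ)) := by
    intro t ht
    have ht' : |b + t| ≤ |m| / 2 := ht
    have habs : |m| ≤ |t + a| + |b + t| := by
      have e : m = (t + a) - (b + t) := by rw [hm]; ring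
      rw [e]; exact abs_sub (t + a) (b + t)
    have h1 : (1 + |m|) / 2 ≤ 1 + |t + a| := by linarith
    have h2 := half_rpow_le (by norm_num : (0:ℝ) ≤ 5/4) h1
    have h3 : (1 + |b + t|) ^ (-A) ≤ (1 + |b + t|) ^ (-(2:ℝ)) :=
      Real.rpow_le_rpow_of_exponent_le (one_le_oaa _) (by linarith)
    exact mul_le_mul h2 h3 (Real.rpow_nonneg (by positivity) _) hc0
  have hS_le : (∫ t in S, h t) ≤ c * Cp 2 := by
    calc (∫ t in S, h t)
        ≤ ∫ t in S, c * (1 + |b + t|) ^ (-(2:ℝ)) :=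
          setIntegral_mono_on h_int.integrableOn (hintb2.const_mul _).integrableOn hSm hboundS
      _ = c * ∫ t in S, (1 + |b + t|) ^ (-(2:ℝ)) := integral_const_mul _ _
      _ ≤ c * ∫ t, (1 + |b + t|) ^ (-(2:ℝ)) := by
          refine mul_le_mul_of_nonneg_left ?_ hc0
          exact setIntegral_le_integral hintb2
            (Filter.Eventually.of_forall fun t => Real.rpow_nonneg (by positivity) _)
      _ = c * Cp 2 := by rw [heqb, integral_shift]
  have hboundSc : ∀ t ∈ Sᶜ, h t ≤ c * (1 + |t + a|) ^ (-(5/4:ℝ)) := by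
    intro t ht
    have ht' : |m| / 2 < |b + t| := by
      simpa [hSdef, not_le] using ht
    have h1 : (1 + |m|) / 2 ≤ 1 + |b + t| := by linarith
    have h3 : (1 + |b + t|) ^ (-A) ≤ (1 + |b + t|) ^ (-(5/4:ℝ)) :=
      Real.rpow_le_rpow_of_exponent_le (one_le_oaa _) (by linarith)
    have h2 := half_rpow_le (by norm_num : (0:ℝ) ≤ 5/4) h1
    calc h t ≤ (1 + |t + a|) ^ (-(5/4:ℝ)) * c :=
          mul_le_mul_of_nonneg_left (h3.trans h2) (Real.rpow_nonneg (by positivity) _)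
      _ = c * (1 + |t + a|) ^ (-(5/4:ℝ)) := mul_comm _ _
  have hSc_le : (∫ t in Sᶜ, h t) ≤ c * Cp (5/4) := by
    calc (∫ t in Sᶜ, h t)
        ≤ ∫ t in Sᶜ, c * (1 + |t + a|) ^ (-(5/4:ℝ)) :=
          setIntegral_mono_on h_int.integrableOn (hint54.const_mul _).integrableOn
            hSm.compl hboundSc
      _ = c * ∫ t in Sᶜ, (1 + |t + a|) ^ (-(5/4:ℝ)) := integral_const_mul _ _
      _ ≤ c * ∫ t, (1 + |t + a|) ^ (-(5/4:ℝ)) := by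
          refine mul_le_mul_of_nonneg_left ?_ hc0
          exact setIntegral_le_integral hint54
            (Filter.Eventually.of_forall fun t => Real.rpow_nonneg (by positivity) _)
      _ = c * Cp (5/4) := by rw [integral_shift]
  have : (∫ t, h t) ≤ c * Cp 2 + c * Cp (5/4) := by rw [split]; exact add_le_add hS_le hSc_le
  calc (∫ t : ℝ, (1 + |t + a|) ^ (-(5/4 : ℝ)) * (1 + |b + t|) ^ (-A)) = ∫ t, h t := rfl
    _ ≤ c * Cp 2 + c * Cp (5/4) := this
    _ = 2 ^ (5/4 : ℝ) * (Cp 2 + Cp (5/4)) * (1 + |m|) ^ (-(5/4 : ℝ)) := by rw [hc]; ring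
lemma integrable_conv {A : ℝ} (hA : 2 ≤ A) (a b : ℝ) :
    Integrable (fun t : ℝ => (1 + |t + a|) ^ (-(5/4 : ℝ)) * (1 + |b + t|) ^ (-A)) := by
  refine (integrable_shift (by norm_num : (1:ℝ) < 5/4) a).mono'
    (Measurable.aestronglyMeasurable (by fun_prop)) (Filter.Eventually.of_forall fun t => ?_)
  have h0 : 0 ≤ (1 + |t + a|) ^ (-(5/4 : ℝ)) * (1 + |b + t|) ^ (-A) :=
    mul_nonneg (Real.rpow_nonneg (by positivity) _) (Real.rpow_nonneg (by positivity) _)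
  rw [Real.norm_eq_abs, abs_of_nonneg h0]
  have h1 : (1 + |b + t|) ^ (-A) ≤ 1 :=
    Real.rpow_le_one_of_one_le_of_nonpos (one_le_oaa _) (by linarith)
  calc (1 + |t + a|) ^ (-(5/4 : ℝ)) * (1 + |b + t|) ^ (-A)
      ≤ (1 + |t + a|) ^ (-(5/4 : ℝ)) * 1 :=
        mul_le_mul_of_nonneg_left h1 (Real.rpow_nonneg (by positivity) _)
    _ = _ := mul_one _

lemma key {A : ℝ} (hA : 2 ≤ A) (r r' : ℝ) (hrr : |r| ≤ |r + r'|) :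
    (∫ t : ℝ, (1 + |t|) ^ ((3:ℝ)/2) / ((1 + |t - r'|) * (1 + |t + r'|)) ^ ((5:ℝ)/4)
        * (1 + |r + t|) ^ (-A))
      ≤ (2 ^ (4:ℝ) * (Cp 2 + Cp (5/4)))
          * ((1 + |r|) ^ ((3:ℝ)/2) / ((1 + |r - r'|) * (1 + |r + r'|)) ^ ((5:ℝ)/4))
        + (2 ^ (A - 2) * Cp (7/4)) * (1 + |r|) ^ (-A + 3) := by
  set f : ℝ → ℝ := fun t => (1 + |t|) ^ ((3:ℝ)/2)
      / ((1 + |t - r'|) * (1 + |t + r'|)) ^ ((5:ℝ)/4) * (1 + |r + t|) ^ (-A) with hf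
  have hP : ∀ t : ℝ, (0:ℝ) < (1 + |t - r'|) * (1 + |t + r'|) := fun t => by positivity
  have f_eq : ∀ t, f t = (1 + |t|) ^ ((3:ℝ)/2)
      * ((1 + |t - r'|) ^ (-((5:ℝ)/4)) * (1 + |t + r'|) ^ (-((5:ℝ)/4)))
      * (1 + |r + t|) ^ (-A) := by
    intro t
    simp only [hf]
    rw [Real.mul_rpow (by positivity : (0:ℝ) ≤ 1 + |t - r'|) (by positivity),
      Real.rpow_neg (by positivity : (0:ℝ) ≤ 1 + |t - r'|),
      Real.rpow_neg (by positivity : (0:ℝ) ≤ 1 + |t + r'|)]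
    ring
  have f_eq' : ∀ t, f t = (1 + |t|) ^ ((3:ℝ)/2)
      * ((1 + |t - r'|) * (1 + |t + r'|)) ^ (-((5:ℝ)/4))
      * (1 + |r + t|) ^ (-A) := by
    intro t
    simp only [hf]
    rw [Real.rpow_neg (hP t).le]
    ring
  have f_nonneg : ∀ t, 0 ≤ f t := fun t => by rw [hf]; positivity
  have habs1 : ∀ t : ℝ, |t| ≤ |r + t| + |r| := fun t => by
    have h := abs_sub (r + t) r
    simpa using h
  -- global (far) pointwise bound
  have hfar : ∀ t, f t ≤ (1 + |r|) ^ ((1:ℝ)/4) * (1 + |r + t|) ^ ((1:ℝ)/4 - A) := by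
    intro t
    have hD : 1 + |t| ≤ (1 + |t - r'|) * (1 + |t + r'|) := by
      have h2 := abs_add_le (t - r') (t + r')
      have h3 : |t - r' + (t + r')| = 2 * |t| := by
        rw [show t - r' + (t + r') = 2 * t by ring, abs_mul]
        norm_num
      nlinarith [abs_nonneg (t - r'), abs_nonneg (t + r'), abs_nonneg t]
    have hD' : ((1 + |t - r'|) * (1 + |t + r'|)) ^ (-((5:ℝ)/4))
        ≤ (1 + |t|) ^ (-((5:ℝ)/4)) :=
      Real.rpow_le_rpow_of_nonpos (by positivity) hD (by norm_num)
    have step1 : f t ≤ (1 + |t|) ^ ((3:ℝ)/2) * (1 + |t|) ^ (-((5:ℝ)/4))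
        * (1 + |r + t|) ^ (-A) := by
      rw [f_eq' t]
      have := mul_le_mul_of_nonneg_left hD'
        (Real.rpow_nonneg (by positivity : (0:ℝ) ≤ 1 + |t|) ((3:ℝ)/2))
      exact mul_le_mul_of_nonneg_right this (Real.rpow_nonneg (by positivity) _)
    have hmerge : (1 + |t|) ^ ((3:ℝ)/2) * (1 + |t|) ^ (-((5:ℝ)/4))
        = (1 + |t|) ^ ((1:ℝ)/4) := by
      rw [← Real.rpow_add (by positivity)]; norm_num
    have hsplit : 1 + |t| ≤ (1 + |r|) * (1 + |r + t|) := by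
      nlinarith [habs1 t, abs_nonneg r, abs_nonneg (r + t)]
    have h14 : (1 + |t|) ^ ((1:ℝ)/4)
        ≤ (1 + |r|) ^ ((1:ℝ)/4) * (1 + |r + t|) ^ ((1:ℝ)/4) := by
      rw [← Real.mul_rpow (by positivity) (by positivity)]
      exact Real.rpow_le_rpow (by positivity) hsplit (by norm_num)
    calc f t ≤ (1 + |t|) ^ ((1:ℝ)/4) * (1 + |r + t|) ^ (-A) := by
          rw [← hmerge]; exact step1
      _ ≤ (1 + |r|) ^ ((1:ℝ)/4) * (1 + |r + t|) ^ ((1:ℝ)/4) * (1 + |r + t|) ^ (-A) :=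
          mul_le_mul_of_nonneg_right h14 (Real.rpow_nonneg (by positivity) _)
      _ = (1 + |r|) ^ ((1:ℝ)/4) * (1 + |r + t|) ^ ((1:ℝ)/4 - A) := by
          rw [mul_assoc, ← Real.rpow_add (by positivity)]
          ring_nf
  -- integrability of f
  have heqr : ∀ q : ℝ, (fun t : ℝ => (1 + |r + t|) ^ (-q)) = fun t => (1 + |t + r|) ^ (-q) :=
    fun q => funext fun t => by rw [add_comm r t]
  have hint74 : Integrable (fun t : ℝ => (1 + |r + t|) ^ (-(7/4:ℝ))) := by
    rw [heqr]; exact integrable_shift (by norm_num) r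
  have f_int : Integrable f := by
    have f_meas : Measurable f := by rw [hf]; fun_prop
    refine (hint74.const_mul ((1 + |r|) ^ ((1:ℝ)/4))).mono'
      f_meas.aestronglyMeasurable (Filter.Eventually.of_forall fun t => ?_)
    rw [Real.norm_eq_abs, abs_of_nonneg (f_nonneg t)]
    refine (hfar t).trans ?_
    refine mul_le_mul_of_nonneg_left ?_ (Real.rpow_nonneg (by positivity) _)
    exact Real.rpow_le_rpow_of_exponent_le (one_le_oaa _) (by linarith)
  -- split into near and far
  set N : Set ℝ := {t | |r + t| ≤ (1 + |r|) / 2} with hNdef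
  have hNm : MeasurableSet N := measurableSet_le (by fun_prop) measurable_const
  have hsplit : (∫ t, f t) = (∫ t in N, f t) + ∫ t in Nᶜ, f t :=
    (integral_add_compl hNm f_int).symm
  -- near part
  set K : ℝ := 2 ^ ((3:ℝ)/2) * (1 + |r|) ^ ((3:ℝ)/2)
      * (2 ^ ((5:ℝ)/4) * (1 + |r + r'|) ^ (-((5:ℝ)/4))) with hK
  have hK0 : 0 ≤ K := by rw [hK]; positivity
  set h : ℝ → ℝ := fun t => (1 + |t + r'|) ^ (-(5/4 : ℝ)) * (1 + |r + t|) ^ (-A) with hh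
  have h_int : Integrable h := integrable_conv hA r' r
  have h_nonneg : ∀ t, 0 ≤ h t := fun t =>
    mul_nonneg (Real.rpow_nonneg (by positivity) _) (Real.rpow_nonneg (by positivity) _)
  have hnear_pt : ∀ t ∈ N, f t ≤ K * h t := by
    intro t ht
    have ht' : |r + t| ≤ (1 + |r|) / 2 := ht
    have hb1 : (1 + |t|) ^ ((3:ℝ)/2) ≤ 2 ^ ((3:ℝ)/2) * (1 + |r|) ^ ((3:ℝ)/2) := by
      rw [← Real.mul_rpow (by norm_num) (by positivity)]
      refine Real.rpow_le_rpow (by positivity) ?_ (by norm_num)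
      have := habs1 t
      nlinarith [abs_nonneg r]
    have hb2 : (1 + |t - r'|) ^ (-((5:ℝ)/4))
        ≤ 2 ^ ((5:ℝ)/4) * (1 + |r + r'|) ^ (-((5:ℝ)/4)) := by
      refine half_rpow_le (by norm_num) ?_
      have h1 : |r + r'| - |r + t| ≤ |t - r'| := by
        have h2 := abs_sub_abs_le_abs_sub (r + r') (r + t)
        have e : |r + r' - (r + t)| = |t - r'| := by
          rw [show r + r' - (r + t) = -(t - r') by ring, abs_neg]
        linarith [e ▸ h2]
      linarith
    rw [f_eq t, hh]
    have hrest : 0 ≤ (1 + |t + r'|) ^ (-((5:ℝ)/4)) := Real.rpow_nonneg (by positivity) _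
    have hE : 0 ≤ (1 + |r + t|) ^ (-A) := Real.rpow_nonneg (by positivity) _
    calc (1 + |t|) ^ ((3:ℝ)/2)
          * ((1 + |t - r'|) ^ (-((5:ℝ)/4)) * (1 + |t + r'|) ^ (-((5:ℝ)/4)))
          * (1 + |r + t|) ^ (-A)
        ≤ (2 ^ ((3:ℝ)/2) * (1 + |r|) ^ ((3:ℝ)/2))
          * ((2 ^ ((5:ℝ)/4) * (1 + |r + r'|) ^ (-((5:ℝ)/4))) * (1 + |t + r'|) ^ (-((5:ℝ)/4)))
          * (1 + |r + t|) ^ (-A) := by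
          refine mul_le_mul_of_nonneg_right ?_ hE
          refine mul_le_mul hb1 (mul_le_mul_of_nonneg_right hb2 hrest) ?_ (by positivity)
          exact mul_nonneg (Real.rpow_nonneg (by positivity) _) hrest
      _ = K * ((1 + |t + r'|) ^ (-(5/4:ℝ)) * (1 + |r + t|) ^ (-A)) := by rw [hK]; ring
  have hnear : (∫ t in N, f t) ≤ K * (2 ^ (5/4 : ℝ) * (Cp 2 + Cp (5/4))
      * (1 + |r' - r|) ^ (-(5/4 : ℝ))) := by
    calc (∫ t in N, f t) ≤ ∫ t in N, K * h t :=
          setIntegral_mono_on f_int.integrableOn (h_int.const_mul K).integrableOn hNm hnear_pt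
      _ = K * ∫ t in N, h t := integral_const_mul _ _
      _ ≤ K * ∫ t, h t := by
          refine mul_le_mul_of_nonneg_left ?_ hK0
          exact setIntegral_le_integral h_int (Filter.Eventually.of_forall h_nonneg)
      _ ≤ _ := mul_le_mul_of_nonneg_left (conv_lemma hA r' r) hK0
  -- far part
  set c2 : ℝ := 2 ^ (A - 2) * (1 + |r|) ^ ((9:ℝ)/4 - A) with hc2
  have hc20 : 0 ≤ c2 := by rw [hc2]; positivity
  have hfar_pt : ∀ t ∈ Nᶜ, f t ≤ c2 * (1 + |r + t|) ^ (-(7/4:ℝ)) := by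
    intro t ht
    have ht' : (1 + |r|) / 2 < |r + t| := by simpa [hNdef, not_le] using ht
    have hExp : ((1:ℝ)/4 - A) = (-(7/4:ℝ)) + (-(A - 2)) := by ring
    have hsplitE : (1 + |r + t|) ^ ((1:ℝ)/4 - A)
        = (1 + |r + t|) ^ (-(7/4:ℝ)) * (1 + |r + t|) ^ (-(A - 2)) := by
      rw [hExp, Real.rpow_add (by positivity)]
    have hb : (1 + |r + t|) ^ (-(A - 2)) ≤ 2 ^ (A - 2) * (1 + |r|) ^ (-(A - 2)) :=
      half_rpow_le (by linarith) (by linarith)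
    calc f t ≤ (1 + |r|) ^ ((1:ℝ)/4) * (1 + |r + t|) ^ ((1:ℝ)/4 - A) := hfar t
      _ = (1 + |r|) ^ ((1:ℝ)/4) * ((1 + |r + t|) ^ (-(7/4:ℝ)) * (1 + |r + t|) ^ (-(A - 2))) := by
          rw [hsplitE]
      _ ≤ (1 + |r|) ^ ((1:ℝ)/4) * ((1 + |r + t|) ^ (-(7/4:ℝ))
            * (2 ^ (A - 2) * (1 + |r|) ^ (-(A - 2)))) := by
          refine mul_le_mul_of_nonneg_left ?_ (Real.rpow_nonneg (by positivity) _)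
          exact mul_le_mul_of_nonneg_left hb (Real.rpow_nonneg (by positivity) _)
      _ = (2 ^ (A - 2) * ((1 + |r|) ^ ((1:ℝ)/4) * (1 + |r|) ^ (-(A - 2))))
            * (1 + |r + t|) ^ (-(7/4:ℝ)) := by ring
      _ = c2 * (1 + |r + t|) ^ (-(7/4:ℝ)) := by
          rw [hc2, ← Real.rpow_add (by positivity : (0:ℝ) < 1 + |r|),
            show (1:ℝ)/4 + -(A - 2) = (9:ℝ)/4 - A by ring]
  have hfarI : (∫ t in Nᶜ, f t) ≤ c2 * Cp (7/4) := by
    calc (∫ t in Nᶜ, f t) ≤ ∫ t in Nᶜ, c2 * (1 + |r + t|) ^ (-(7/4:ℝ)) :=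
          setIntegral_mono_on f_int.integrableOn (hint74.const_mul c2).integrableOn
            hNm.compl hfar_pt
      _ = c2 * ∫ t in Nᶜ, (1 + |r + t|) ^ (-(7/4:ℝ)) := integral_const_mul _ _
      _ ≤ c2 * ∫ t, (1 + |r + t|) ^ (-(7/4:ℝ)) := by
          refine mul_le_mul_of_nonneg_left ?_ hc20
          exact setIntegral_le_integral hint74
            (Filter.Eventually.of_forall fun t => Real.rpow_nonneg (by positivity) _)
      _ = c2 * Cp (7/4) := by rw [heqr, integral_shift]
  -- combine
  have hfin1 : K * (2 ^ (5/4 : ℝ) * (Cp 2 + Cp (5/4)) * (1 + |r' - r|) ^ (-(5/4 : ℝ)))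
      = (2 ^ (4:ℝ) * (Cp 2 + Cp (5/4)))
        * ((1 + |r|) ^ ((3:ℝ)/2) / ((1 + |r - r'|) * (1 + |r + r'|)) ^ ((5:ℝ)/4)) := by
    have h2 : (2:ℝ) ^ ((3:ℝ)/2) * (2 ^ ((5:ℝ)/4) * 2 ^ ((5:ℝ)/4)) = 2 ^ (4:ℝ) := by
      rw [← Real.rpow_add (by norm_num : (0:ℝ) < 2),
        ← Real.rpow_add (by norm_num : (0:ℝ) < 2)]
      norm_num
    rw [hK, abs_sub_comm r' r,
      Real.mul_rpow (by positivity : (0:ℝ) ≤ 1 + |r - r'|) (by positivity),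
      Real.rpow_neg (by positivity : (0:ℝ) ≤ 1 + |r + r'|),
      Real.rpow_neg (by positivity : (0:ℝ) ≤ 1 + |r - r'|), ← h2]
    ring
  have hfin2 : c2 * Cp (7/4) ≤ (2 ^ (A - 2) * Cp (7/4)) * (1 + |r|) ^ (-A + 3) := by
    rw [hc2]
    have h94 : (1 + |r|) ^ ((9:ℝ)/4 - A) ≤ (1 + |r|) ^ (-A + 3) :=
      Real.rpow_le_rpow_of_exponent_le (one_le_oaa _) (by linarith)
    calc 2 ^ (A - 2) * (1 + |r|) ^ ((9:ℝ)/4 - A) * Cp (7/4)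
        ≤ 2 ^ (A - 2) * (1 + |r|) ^ (-A + 3) * Cp (7/4) := by
          refine mul_le_mul_of_nonneg_right ?_ (Cp_nonneg _)
          exact mul_le_mul_of_nonneg_left h94 (by positivity)
      _ = (2 ^ (A - 2) * Cp (7/4)) * (1 + |r|) ^ (-A + 3) := by ring
  calc (∫ t : ℝ, (1 + |t|) ^ ((3:ℝ)/2) / ((1 + |t - r'|) * (1 + |t + r'|)) ^ ((5:ℝ)/4)
        * (1 + |r + t|) ^ (-A)) = ∫ t, f t := rfl
    _ = (∫ t in N, f t) + ∫ t in Nᶜ, f t := hsplit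
    _ ≤ K * (2 ^ (5/4 : ℝ) * (Cp 2 + Cp (5/4)) * (1 + |r' - r|) ^ (-(5/4 : ℝ)))
        + c2 * Cp (7/4) := add_le_add hnear hfarI
    _ ≤ _ := by rw [hfin1]; exact add_le_add (le_refl _) hfin2

/-- Localized integral estimate used for the terms `M₂`, `M₃` in the proof of
Theorem 1.6(2): for `A ≥ 2` there is `C = C(A)` with
`∫_ℝ (1+|t|)^{3/2} ((1+|t−r'|)(1+|t+r'|))^{−5/4} (1+|r+t|)^{−A} dt
  ≤ C (1+|r|)^{3/2} ((1+|r−r'|)(1+|r+r'|))^{−5/4} + C (1+|r|)^{−A+3}`. -/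
theorem stmt12 (A : ℝ) (hA : 2 ≤ A) :
    ∃ C : ℝ, 0 < C ∧ ∀ r r' : ℝ,
      (∫ t : ℝ, (1 + |t|) ^ ((3:ℝ)/2) / ((1 + |t - r'|) * (1 + |t + r'|)) ^ ((5:ℝ)/4)
          * (1 + |r + t|) ^ (-A))
        ≤ C * ((1 + |r|) ^ ((3:ℝ)/2) / ((1 + |r - r'|) * (1 + |r + r'|)) ^ ((5:ℝ)/4))
          + C * (1 + |r|) ^ (-A + 3) := by
  have h1 : (0:ℝ) ≤ 2 ^ (4:ℝ) * (Cp 2 + Cp (5/4)) :=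
    mul_nonneg (by positivity) (add_nonneg (Cp_nonneg _) (Cp_nonneg _))
  have h2 : (0:ℝ) ≤ 2 ^ (A - 2) * Cp (7/4) :=
    mul_nonneg (by positivity) (Cp_nonneg _)
  refine ⟨2 ^ (4:ℝ) * (Cp 2 + Cp (5/4)) + 2 ^ (A - 2) * Cp (7/4) + 1, by linarith, ?_⟩
  intro r r'
  have habs : 2 * |r| ≤ |r + r'| + |r - r'| := by
    have h := abs_add_le (r + r') (r - r')
    have e : |r + r' + (r - r')| = 2 * |r| := by
      rw [show r + r' + (r - r') = 2 * r by ring, abs_mul]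
      norm_num
    linarith [e ▸ h]
  rcases le_total (|r - r'|) (|r + r'|) with hc | hc
  · have hrr : |r| ≤ |r + r'| := by linarith
    refine (key hA r r' hrr).trans ?_
    refine add_le_add (mul_le_mul_of_nonneg_right (by linarith) (by positivity))
      (mul_le_mul_of_nonneg_right (by linarith) (by positivity))
  · have hrr : |r| ≤ |r + -r'| := by
      rw [← sub_eq_add_neg]; linarith
    have hkey := key hA r (-r') hrr
    simp only [sub_neg_eq_add, ← sub_eq_add_neg] at hkey
    have e1 : (∫ t : ℝ, (1 + |t|) ^ ((3:ℝ)/2)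
          / ((1 + |t + r'|) * (1 + |t - r'|)) ^ ((5:ℝ)/4) * (1 + |r + t|) ^ (-A))
        = (∫ t : ℝ, (1 + |t|) ^ ((3:ℝ)/2)
          / ((1 + |t - r'|) * (1 + |t + r'|)) ^ ((5:ℝ)/4) * (1 + |r + t|) ^ (-A)) := by
      congr 1
      funext t
      rw [mul_comm (1 + |t + r'|)]
    rw [e1, mul_comm (1 + |r + r'|)] at hkey
    refine hkey.trans ?_
    refine add_le_add (mul_le_mul_of_nonneg_right (by linarith) (by positivity))
      (mul_le_mul_of_nonneg_right (by linarith) (by positivity))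
end
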